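/- arXiv:1501.02470 — 2 statements merged into one kernel-verified Lean document; each statement's English description precedes it below -/
import Mathlib

section
/- Let K be a finite field with |K| = q, let W be a finite-dimensional K-vector space, and let (U,V) be a nontrivial solution of the isometry equation with tuples of length m = q+1 such that max_i dim_K V_i = max_i dim_K U_i = n > 1. Then for every j ∈ {1,…,m} with dim_K U_j = n, there exists a subspace S ⊂ U_j with dim_K S = n−2 such that S ⊆ V_i for all i ∈ {1,…,m}. -/
open Finset
open scoped Classical

/-- The pair of tuples `(U, V)` is a solution of the isometry equation
`∑ i, (1/|V i|) • 1_{V i} = ∑ i, (1/|U i|) • 1_{U i}` as real-valued functions on `W`. -/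
def IsometrySolution {K W : Type*} [Field K] [AddCommGroup W] [Module K W]
    {m : ℕ} (U V : Fin m → Submodule K W) : Prop :=
  ∀ w : W,
    ∑ i, ((Nat.card ↥(V i) : ℝ))⁻¹ * (if w ∈ V i then 1 else 0) =
    ∑ i, ((Nat.card ↥(U i) : ℝ))⁻¹ * (if w ∈ U i then 1 else 0)

/-- Two tuples of subspaces are equivalent if one is a permutation of the other. -/
def TuplesEquiv {K W : Type*} [Field K] [AddCommGroup W] [Module K W]
    {m : ℕ} (U V : Fin m → Submodule K W) : Prop :=
  ∃ π : Equiv.Perm (Fin m), ∀ i, V i = U (π i)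

/-!
Write `q = |K|`. Counting nonzero vectors shows that `q` proper subspaces never cover a space
over `K`. Hence if both sides of a solution have at most `q` members, a member `M` of maximal
dimension among both sides occurs on both: every vector of `M` lies in some member of the
other side, and these members meet `M` properly unless one of them is `M`. Cancelling `M` and
inducting, such solutions are trivial. So in a nontrivial solution of length `q + 1` the space
`U j` lies in no `V i` (else cancel it), while the `q + 1` proper subspaces `U j ⊓ V i` cover it.
Such a cover of a space `X` by `q + 1` proper subspaces `H i` is rigid: if `G ⊇ H c` is a
hyperplane of `X`, the other `q` members cover `X \ G`, and each of them contains at most a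
`1/q`-th of its points, with equality only for hyperplanes. So the union bound is tight: those
members are hyperplanes, pairwise meeting inside `G`. Hence all `H i` contain the
codimension-two subspace `H a ⊓ H b`.
-/

open Module

namespace Finset

variable {ι α : Type*} {s : Finset ι} {A : ι → Finset α} {T : Finset α}

theorem sum_card_le_of_card_mul_le (h : ∀ i ∈ s, #s * #(A i) ≤ #T) :
    ∑ i ∈ s, #(A i) ≤ #T := by
  obtain rfl | hs := s.eq_empty_or_nonempty
  · simp
  refine Nat.le_of_mul_le_mul_left ?_ hs.card_pos
  rw [mul_sum]
  simpa using sum_le_sum h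

theorem card_mul_eq_of_subset_biUnion (hcov : T ⊆ s.biUnion A)
    (h : ∀ i ∈ s, #s * #(A i) ≤ #T) : ∀ i ∈ s, #s * #(A i) = #T := by
  refine (sum_eq_sum_iff_of_le h).1 (le_antisymm (sum_le_sum h) ?_)
  rw [sum_const, smul_eq_mul, ← mul_sum]
  exact Nat.mul_le_mul_left _ ((card_le_card hcov).trans card_biUnion_le)

theorem pairwiseDisjoint_of_subset_biUnion (hcov : T ⊆ s.biUnion A)
    (hsum : ∑ i ∈ s, #(A i) ≤ #T) : (s : Set ι).PairwiseDisjoint A := by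
  intro a ha b hb hab
  rw [Function.onFun, disjoint_left]
  intro x hxa hxb
  have hx : x ∈ (s.erase a).biUnion A :=
    mem_biUnion.2 ⟨b, mem_erase.2 ⟨Ne.symm hab, hb⟩, hxb⟩
  have hsub : s.biUnion A ⊆ (A a).erase x ∪ (s.erase a).biUnion A := by
    intro y hy
    obtain ⟨i, hi, hyi⟩ := mem_biUnion.1 hy
    by_cases hia : i = a
    · by_cases hyx : y = x
      · exact mem_union_right _ (hyx ▸ hx)
      · exact mem_union_left _ (mem_erase.2 ⟨hyx, hia ▸ hyi⟩)
    · exact mem_union_right _ (mem_biUnion.2 ⟨i, mem_erase.2 ⟨hia, hi⟩, hyi⟩)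
  have hT : #T ≤ (#(A a) - 1) + ∑ i ∈ s.erase a, #(A i) := calc
    #T ≤ #(s.biUnion A) := card_le_card hcov
    _ ≤ #((A a).erase x) + #((s.erase a).biUnion A) :=
      (card_le_card hsub).trans (card_union_le _ _)
    _ ≤ (#(A a) - 1) + ∑ i ∈ s.erase a, #(A i) := by
      rw [card_erase_of_mem hxa]
      exact Nat.add_le_add_left card_biUnion_le _
  have := add_sum_erase s (fun i => #(A i)) ha
  have := card_pos.2 ⟨x, hxa⟩
  omega

end Finset

theorem exists_perm_apply_eq_of_map_univ_val_eq {α : Type*} {m : ℕ} {f g : Fin m → α}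
    (h : univ.val.map f = univ.val.map g) : ∃ σ : Equiv.Perm (Fin m), ∀ i, f i = g (σ i) := by
  have hfib a : Fintype.card {i // f i = a} = Fintype.card {i // g i = a} := by
    have hc := congrArg (Multiset.count a) h
    rw [Multiset.count_map, Multiset.count_map] at hc
    rw [Fintype.card_subtype, Fintype.card_subtype]
    simpa [Finset.filter, eq_comm] using hc
  let e a : {i // f i = a} ≃ {i // g i = a} := Fintype.equivOfCardEq (hfib a)
  exact ⟨(Equiv.sigmaFiberEquiv f).symm.trans
    ((Equiv.sigmaCongrRight e).trans (Equiv.sigmaFiberEquiv g)),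
    fun i => ((e (f i)) ⟨i, rfl⟩).2.symm⟩

namespace Submodule

variable {K W : Type*} [Field K] [AddCommGroup W] [Module K W]

theorem exists_le_finrank_add_one_eq [FiniteDimensional K W] {H X : Submodule K W} (h : H < X) :
    ∃ G, H ≤ G ∧ G ≤ X ∧ finrank K G + 1 = finrank K X := by
  induction H using WellFoundedGT.induction with
  | _ H ih =>
  obtain ⟨v, hvX, hvH⟩ := SetLike.exists_of_lt h
  have hle : H ⊔ span K {v} ≤ X := sup_le h.le ((span_singleton_le_iff_mem _ _).2 hvX)
  rcases hle.lt_or_eq with hlt | heq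
  · obtain ⟨G, hHG, hG⟩ :=
      ih _ (left_lt_sup.2 fun h => hvH (h (mem_span_singleton_self v))) hlt
    exact ⟨G, le_sup_left.trans hHG, hG⟩
  · exact ⟨H, le_rfl, h.le, heq ▸ (finrank_sup_span_singleton hvH).symm⟩

theorem finrank_inf_add_one_of_not_le [FiniteDimensional K W] {G H X : Submodule K W}
    (hGX : G ≤ X) (hG : finrank K G + 1 = finrank K X) (hHX : H ≤ X) (hHG : ¬ H ≤ G) :
    finrank K ↥(H ⊓ G) + 1 = finrank K H := by
  have hlt : finrank K G < finrank K ↥(H ⊔ G) :=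
    finrank_lt_finrank_of_lt (right_lt_sup.2 hHG)
  have hle : finrank K ↥(H ⊔ G) ≤ finrank K X := finrank_mono (sup_le hHX hGX)
  have := finrank_sup_add_finrank_inf_eq H G
  omega

section Finite

variable [Fintype K] [Fintype W]

local notation "q" => Fintype.card K

theorem card_toFinset (p : Submodule K W) : #(p : Set W).toFinset = q ^ finrank K p := by
  rw [Set.toFinset_card]
  exact Module.card_eq_pow_finrank

theorem card_toFinset_sdiff_of_finrank_add_one {P Q : Submodule K W} (hPQ : P ≤ Q)
    (h : finrank K P + 1 = finrank K Q) :
    #((Q : Set W).toFinset \ (P : Set W).toFinset) = (q - 1) * #(P : Set W).toFinset := by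
  rw [card_sdiff_of_subset (Set.toFinset_subset_toFinset.2 hPQ), card_toFinset, card_toFinset,
    ← h, pow_succ, Nat.sub_one_mul, mul_comm]

theorem exists_mem_forall_notMem_of_card_le {X : Submodule K W} {s : Finset (Submodule K W)}
    (hs : #s ≤ q) (hX : ∀ H ∈ s, ¬ X ≤ H) : ∃ x ∈ X, ∀ H ∈ s, x ∉ H := by
  by_contra! hcov
  obtain rfl | ⟨H₀, hH₀⟩ := s.eq_empty_or_nonempty
  · simpa using hcov 0 X.zero_mem
  have hinf : ∀ H ∈ s, finrank K ↥(X ⊓ H) < finrank K X := fun H hH =>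
    finrank_lt_finrank_of_lt (inf_lt_left.2 (hX H hH))
  obtain ⟨n, hn⟩ := Nat.exists_eq_add_one.2 ((Nat.zero_le _).trans_lt (hinf H₀ hH₀))
  have hsub : (X : Set W).toFinset.erase 0 ⊆
      s.biUnion fun H => ((X ⊓ H : Submodule K W) : Set W).toFinset.erase 0 := by
    intro x hx
    simp only [mem_erase, Set.mem_toFinset, SetLike.mem_coe] at hx
    obtain ⟨H, hH, hxH⟩ := hcov x hx.2
    simp only [mem_biUnion, mem_erase, Set.mem_toFinset, SetLike.mem_coe, mem_inf]
    exact ⟨H, hH, hx.1, hx.2, hxH⟩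
  have hterm : ∀ H ∈ s,
      #(((X ⊓ H : Submodule K W) : Set W).toFinset.erase 0) ≤ q ^ n - 1 := by
    intro H hH
    rw [card_erase_of_mem (by simp), card_toFinset]
    have := Nat.pow_le_pow_right (Fintype.card_pos (α := K)) (Nat.le_of_lt_succ (hn ▸ hinf H hH))
    omega
  have hcount : q * q ^ n - 1 ≤ q * q ^ n - q := calc
    q * q ^ n - 1 = #((X : Set W).toFinset.erase 0) := by
      rw [card_erase_of_mem (by simp), card_toFinset, hn, pow_succ']
    _ ≤ #s * (q ^ n - 1) :=
      (card_le_card hsub).trans (card_biUnion_le.trans (sum_le_card_nsmul _ _ _ hterm))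
    _ ≤ q * q ^ n - q := by rw [← Nat.mul_sub_one]; exact Nat.mul_le_mul_right _ hs
  have hq : 1 < q := Fintype.one_lt_card
  have : q ≤ q * q ^ n := Nat.le_mul_of_pos_right _ (Nat.pow_pos (by omega))
  omega

theorem mul_card_toFinset_sdiff_of_not_le [FiniteDimensional K W] {G H X : Submodule K W}
    (hGX : G ≤ X) (hG : finrank K G + 1 = finrank K X) (hHX : H ≤ X) (hHG : ¬ H ≤ G) :
    q * #((H : Set W).toFinset \ (G : Set W).toFinset) = (q - 1) * #(H : Set W).toFinset := by
  have hHG' := finrank_inf_add_one_of_not_le hGX hG hHX hHG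
  have hsdiff : (H : Set W).toFinset \ (G : Set W).toFinset
      = (H : Set W).toFinset \ ((H ⊓ G : Submodule K W) : Set W).toFinset := by
    ext x
    simp +contextual
  rw [hsdiff, card_toFinset_sdiff_of_finrank_add_one inf_le_left hHG', card_toFinset,
    card_toFinset, ← hHG', pow_succ]
  ring

theorem mul_card_toFinset_sdiff_le [FiniteDimensional K W] {G H X : Submodule K W}
    (hGX : G ≤ X) (hG : finrank K G + 1 = finrank K X) (hHX : H < X) :
    q * #((H : Set W).toFinset \ (G : Set W).toFinset) ≤
      #((X : Set W).toFinset \ (G : Set W).toFinset) := by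
  by_cases hHG : H ≤ G
  · simp [sdiff_eq_empty_iff_subset.2 (Set.toFinset_subset_toFinset.2 hHG)]
  rw [mul_card_toFinset_sdiff_of_not_le hGX hG hHX.le hHG,
    card_toFinset_sdiff_of_finrank_add_one hGX hG, card_toFinset, card_toFinset]
  have := finrank_lt_finrank_of_lt hHX
  exact Nat.mul_le_mul_left _ (Nat.pow_le_pow_right (Fintype.card_pos (α := K)) (by omega))

theorem finrank_add_one_eq_of_mul_card_toFinset_sdiff_eq [FiniteDimensional K W]
    {G H X : Submodule K W} (hGX : G ≤ X) (hG : finrank K G + 1 = finrank K X) (hHX : H ≤ X)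
    (h : q * #((H : Set W).toFinset \ (G : Set W).toFinset) =
      #((X : Set W).toFinset \ (G : Set W).toFinset)) :
    finrank K H + 1 = finrank K X ∧ ¬ H ≤ G := by
  have hq : 1 < q := Fintype.one_lt_card
  rw [card_toFinset_sdiff_of_finrank_add_one hGX hG, card_toFinset] at h
  by_cases hHG : H ≤ G
  · rw [sdiff_eq_empty_iff_subset.2 (Set.toFinset_subset_toFinset.2 hHG), card_empty,
      mul_zero] at h
    have := Nat.pow_pos (n := finrank K G) (Nat.zero_lt_of_lt hq)
    have := Nat.mul_pos (Nat.sub_pos_of_lt hq) this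
    omega
  rw [mul_card_toFinset_sdiff_of_not_le hGX hG hHX hHG, card_toFinset] at h
  have := Nat.pow_right_injective hq (Nat.eq_of_mul_eq_mul_left (by omega) h)
  exact ⟨by omega, hHG⟩

theorem finrank_add_one_eq_and_inf_le_of_cover_sdiff {ι : Type*} {s : Finset ι} (hs : #s = q)
    {G X : Submodule K W} (hGX : G ≤ X) (hG : finrank K G + 1 = finrank K X)
    {H : ι → Submodule K W} (hH : ∀ i ∈ s, H i < X)
    (hcov : ∀ x ∈ X, x ∉ G → ∃ i ∈ s, x ∈ H i) :
    (∀ i ∈ s, finrank K (H i) + 1 = finrank K X ∧ ¬ H i ≤ G) ∧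
      ∀ a ∈ s, ∀ b ∈ s, a ≠ b → H a ⊓ H b ≤ G := by
  have : FiniteDimensional K W := Module.Finite.of_finite
  set T := (X : Set W).toFinset \ (G : Set W).toFinset
  set A := fun i => (H i : Set W).toFinset \ (G : Set W).toFinset
  have hsub : T ⊆ s.biUnion A := by
    intro x hx
    simp only [T, mem_sdiff, Set.mem_toFinset, SetLike.mem_coe] at hx
    obtain ⟨i, hi, hxi⟩ := hcov x hx.1 hx.2
    exact mem_biUnion.2 ⟨i, hi, by simp [A, hxi, hx.2]⟩
  have hle : ∀ i ∈ s, #s * #(A i) ≤ #T := fun i hi =>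
    hs ▸ mul_card_toFinset_sdiff_le hGX hG (hH i hi)
  have hdisj := pairwiseDisjoint_of_subset_biUnion hsub (sum_card_le_of_card_mul_le hle)
  refine ⟨fun i hi => finrank_add_one_eq_of_mul_card_toFinset_sdiff_eq hGX hG (hH i hi).le
    (hs ▸ card_mul_eq_of_subset_biUnion hsub hle i hi), fun a ha b hb hab x hx => ?_⟩
  by_contra hxG
  obtain ⟨hxa, hxb⟩ := Submodule.mem_inf.1 hx
  exact Finset.disjoint_left.1 (hdisj ha hb hab) (by simp [A, hxa, hxG] : x ∈ A a)
    (by simp [A, hxb, hxG])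

theorem exists_finrank_add_two_eq_of_cover {ι : Type*} [Fintype ι] (hι : Fintype.card ι = q + 1)
    {X : Submodule K W} {H : ι → Submodule K W} (hH : ∀ i, H i < X)
    (hcov : ∀ x ∈ X, ∃ i, x ∈ H i) :
    ∃ S : Submodule K W, finrank K S + 2 = finrank K X ∧ ∀ i, S ≤ H i := by
  have : FiniteDimensional K W := Module.Finite.of_finite
  have hq : 1 < q := Fintype.one_lt_card
  choose G hHG hGX hG using fun c => exists_le_finrank_add_one_eq (hH c)
  have mem_erase_univ {i c : ι} (h : i ≠ c) : i ∈ univ.erase c :=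
    mem_erase.2 ⟨h, mem_univ i⟩
  have key c := finrank_add_one_eq_and_inf_le_of_cover_sdiff
    (by rw [card_erase_of_mem (mem_univ c), card_univ, hι, Nat.add_sub_cancel]) (hGX c) (hG c)
    (fun i _ => hH i) fun x hx hxG => by
      obtain ⟨i, hi⟩ := hcov x hx
      exact ⟨i, mem_erase_univ fun h => hxG (hHG c (h ▸ hi)), hi⟩
  have hhyp i : finrank K (H i) + 1 = finrank K X := by
    obtain ⟨c, hc⟩ := Fintype.exists_ne_of_one_lt_card (α := ι) (by omega) i
    exact ((key c).1 i (mem_erase_univ hc.symm)).1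
  have hGeq c : H c = G c :=
    eq_of_le_of_finrank_le (hHG c) (by have := hhyp c; have := hG c; omega)
  obtain ⟨a, b, c, hab, hac, hbc⟩ := (Fintype.two_lt_card_iff (α := ι)).1 (by omega)
  have hab' : ¬ H a ≤ H b := fun hle => ((key c).1 a (mem_erase_univ hac)).2
    ((le_inf le_rfl hle).trans ((key c).2 a (mem_erase_univ hac) b (mem_erase_univ hbc) hab))
  refine ⟨H a ⊓ H b, ?_, fun i => ?_⟩
  · have := finrank_inf_add_one_of_not_le (hH b).le (hhyp b) (hH a).le hab'
    have := hhyp a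
    omega
  · by_cases hia : i = a
    · exact hia ▸ inf_le_left
    by_cases hib : i = b
    · exact hib ▸ inf_le_right
    rw [hGeq i]
    exact (key i).2 a (mem_erase_univ (Ne.symm hia)) b (mem_erase_univ (Ne.symm hib)) hab

end Finite
end Submodule

section IsometrySum

variable {K W : Type*} [Field K] [AddCommGroup W] [Module K W]

noncomputable def isometrySum (A : Multiset (Submodule K W)) (w : W) : ℝ :=
  (A.map fun p : Submodule K W => (Nat.card p : ℝ)⁻¹ * if w ∈ p then 1 else 0).sum

theorem isometrySolution_iff {m : ℕ} {U V : Fin m → Submodule K W} :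
    IsometrySolution U V ↔ isometrySum (univ.val.map V) = isometrySum (univ.val.map U) := by
  simp only [IsometrySolution, funext_iff, isometrySum, Multiset.map_map]
  rfl

theorem isometrySum_cons (p : Submodule K W) (A : Multiset (Submodule K W)) :
    isometrySum (p ::ₘ A) =
      (fun w => (Nat.card p : ℝ)⁻¹ * if w ∈ p then 1 else 0) + isometrySum A := by
  ext w
  simp [isometrySum]

theorem isometrySum_pos_iff [Finite W] {A : Multiset (Submodule K W)} {w : W} :
    0 < isometrySum A w ↔ ∃ p ∈ A, w ∈ p := by
  induction A using Multiset.induction_on with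
  | empty => simp [isometrySum]
  | cons p A ih =>
    have hA : 0 ≤ isometrySum A w := Multiset.sum_nonneg fun _ hx => by
      obtain ⟨_, _, rfl⟩ := Multiset.mem_map.1 hx; positivity
    have hp : (0 : ℝ) < (Nat.card p : ℝ)⁻¹ := by
      have : 0 < Nat.card p := Nat.card_pos
      positivity
    by_cases hwp : w ∈ p
    · simpa [isometrySum_cons, hwp] using add_pos_of_pos_of_nonneg hp hA
    · simp [isometrySum_cons, hwp, ← ih]

theorem isometrySum_erase_eq {A B : Multiset (Submodule K W)} (h : isometrySum A = isometrySum B)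
    {M : Submodule K W} (hA : M ∈ A) (hB : M ∈ B) :
    isometrySum (A.erase M) = isometrySum (B.erase M) := by
  rw [← Multiset.cons_erase hA, ← Multiset.cons_erase hB, isometrySum_cons,
    isometrySum_cons] at h
  exact add_left_cancel h

theorem exists_mem_of_isometrySum_eq [Finite W] {A B : Multiset (Submodule K W)}
    (h : isometrySum A = isometrySum B) {M : Submodule K W} (hM : M ∈ A) {x : W} (hx : x ∈ M) :
    ∃ p ∈ B, x ∈ p :=
  isometrySum_pos_iff.1 (h ▸ isometrySum_pos_iff.2 ⟨M, hM, hx⟩)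

variable [Fintype K] [Fintype W]

theorem mem_of_isometrySum_eq {A B : Multiset (Submodule K W)} (hB : B.card ≤ Fintype.card K)
    (h : isometrySum A = isometrySum B) {M : Submodule K W} (hM : M ∈ A)
    (hmax : ∀ p ∈ B, finrank K p ≤ finrank K M) : M ∈ B := by
  have : FiniteDimensional K W := Module.Finite.of_finite
  by_contra hMB
  obtain ⟨x, hxM, hx⟩ := Submodule.exists_mem_forall_notMem_of_card_le (X := M)
    (s := B.toFinset) ((Multiset.toFinset_card_le B).trans hB) fun p hp hle => by
      rw [Multiset.mem_toFinset] at hp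
      exact hMB (Submodule.eq_of_le_of_finrank_le hle (hmax p hp) ▸ hp)
  obtain ⟨p, hp, hxp⟩ := exists_mem_of_isometrySum_eq h hM hxM
  exact hx p (Multiset.mem_toFinset.2 hp) hxp

theorem eq_of_isometrySum_eq {A B : Multiset (Submodule K W)} (hA : A.card ≤ Fintype.card K)
    (hB : B.card ≤ Fintype.card K) (h : isometrySum A = isometrySum B) : A = B := by
  induction A using Multiset.strongInductionOn generalizing B with
  | ih A ih =>
  obtain hAB | ⟨p, hp⟩ := Multiset.empty_or_exists_mem (A + B)
  · obtain ⟨rfl, rfl⟩ := add_eq_zero.1 hAB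
    rfl
  obtain ⟨M, hM, hmax⟩ := (A + B).toFinset.exists_max_image (fun p => finrank K p)
    ⟨p, Multiset.mem_toFinset.2 hp⟩
  have hmax' : ∀ p ∈ A + B, finrank K p ≤ finrank K M := fun p hp =>
    hmax p (Multiset.mem_toFinset.2 hp)
  have hMAB : M ∈ A ∧ M ∈ B := by
    rcases Multiset.mem_add.1 (Multiset.mem_toFinset.1 hM) with hMA | hMB
    · exact ⟨hMA, mem_of_isometrySum_eq hB h hMA fun p hp =>
        hmax' p (Multiset.mem_add.2 (.inr hp))⟩
    · exact ⟨mem_of_isometrySum_eq hA h.symm hMB fun p hp =>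
        hmax' p (Multiset.mem_add.2 (.inl hp)), hMB⟩
  rw [← Multiset.cons_erase hMAB.1, ← Multiset.cons_erase hMAB.2,
    ih _ (Multiset.erase_lt.2 hMAB.1) ((Multiset.card_erase_le).trans hA)
      ((Multiset.card_erase_le).trans hB) (isometrySum_erase_eq h hMAB.1 hMAB.2)]

theorem notMem_of_isometrySum_eq {A B : Multiset (Submodule K W)}
    (hA : A.card = Fintype.card K + 1) (hB : B.card = Fintype.card K + 1)
    (h : isometrySum A = isometrySum B) (hne : A ≠ B) {M : Submodule K W} (hM : M ∈ B) :
    M ∉ A := fun hMA => hne <| by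
  rw [← Multiset.cons_erase hMA, ← Multiset.cons_erase hM, eq_of_isometrySum_eq
    (by rw [Multiset.card_erase_of_mem hMA, hA]; rfl)
    (by rw [Multiset.card_erase_of_mem hM, hB]; rfl)
    (isometrySum_erase_eq h hMA hM)]

end IsometrySum

theorem nontrivial_solution_common_subspace_of_maxdim_general
    (K W : Type*) [Field K] [Fintype K] [AddCommGroup W] [Module K W]
    [FiniteDimensional K W]
    (U V : Fin (Fintype.card K + 1) → Submodule K W)
    (hsol : IsometrySolution U V) (hnontriv : ¬ TuplesEquiv U V)
    (n : ℕ)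
    (hmaxV : (Finset.univ.sup fun i => Module.finrank K ↥(V i)) = n) :
    ∀ j, Module.finrank K ↥(U j) = n →
      ∃ S : Submodule K W, S < U j ∧ Module.finrank K ↥S = n - 2 ∧ ∀ i, S ≤ V i := by
  intro j hj
  have : Finite W := Module.finite_of_finite K
  have : Fintype W := Fintype.ofFinite W
  have hsum := isometrySolution_iff.1 hsol
  have hne : univ.val.map V ≠ univ.val.map U := fun h =>
    hnontriv (exists_perm_apply_eq_of_map_univ_val_eq h)
  have hUj : U j ∈ univ.val.map U := Multiset.mem_map_of_mem U (mem_univ_val j)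
  have hUV i : ¬ U j ≤ V i := fun hle => by
    have hVU : V i = U j := (Submodule.eq_of_le_of_finrank_le hle
      (hj ▸ hmaxV ▸ le_sup (f := fun i => finrank K (V i)) (mem_univ i))).symm
    exact notMem_of_isometrySum_eq (by simp) (by simp) hsum hne hUj
      (hVU ▸ Multiset.mem_map_of_mem V (mem_univ_val i))
  have hcov : ∀ x ∈ U j, ∃ i, x ∈ U j ⊓ V i := fun x hx => by
    obtain ⟨_, hp, hxp⟩ := exists_mem_of_isometrySum_eq hsum.symm hUj hx
    obtain ⟨i, -, rfl⟩ := Multiset.mem_map.1 hp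
    exact ⟨i, hx, hxp⟩
  obtain ⟨S, hS, hSV⟩ :=
    Submodule.exists_finrank_add_two_eq_of_cover (by simp) (fun i => inf_lt_left.2 (hUV i)) hcov
  refine ⟨S, lt_of_le_of_ne ((hSV j).trans inf_le_left) ?_, by omega,
    fun i => (hSV i).trans inf_le_right⟩
  rintro rfl
  omega

/-- In a nontrivial minimal solution with equal maximal dimensions `n > 1`, for every `j`
with `dim (U j) = n` there is a subspace `S ⊂ U j` of dimension `n - 2` contained in every
`V i`. -/
theorem nontrivial_solution_common_subspace_of_maxdim
    (K W : Type*) [Field K] [Fintype K] [AddCommGroup W] [Module K W]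
    [FiniteDimensional K W]
    (U V : Fin (Fintype.card K + 1) → Submodule K W)
    (hsol : IsometrySolution U V) (hnontriv : ¬ TuplesEquiv U V)
    (n : ℕ) (hn : 1 < n)
    (hmaxV : (Finset.univ.sup fun i => Module.finrank K ↥(V i)) = n)
    (hmaxU : (Finset.univ.sup fun i => Module.finrank K ↥(U i)) = n) :
    ∀ j, Module.finrank K ↥(U j) = n →
      ∃ S : Submodule K W, S < U j ∧ Module.finrank K ↥S = n - 2 ∧ ∀ i, S ≤ V i :=
  nontrivial_solution_common_subspace_of_maxdim_general K W U V hsol hnontriv n hmaxV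
end

section
/- Let K be a finite field with |K| = q, let W be a finite-dimensional K-vector space, and let (U,V) be a nontrivial solution of the isometry equation with tuples of length m = q+1 such that max_i dim_K V_i = max_i dim_K U_i = n > 1. Then there exists a subspace S ⊆ W with dim_K S = n−2 such that S ⊆ U_i and S ⊆ V_i for all i ∈ {1,…,m}. -/
open Finset Module
open scoped Classical

theorem Nat.mul_pow_sub_one_lt {q : ℕ} (hq : 1 < q) (e : ℕ) :
    q * (q ^ e - 1) < q ^ (e + 1) - 1 := by
  have h := Nat.one_le_pow e q (by omega)
  have h' : q ≤ q ^ e * q := Nat.le_mul_of_pos_left q h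
  rw [pow_succ, Nat.mul_sub, mul_one, mul_comm]
  omega

theorem Nat.succ_mul_pow_sub_one_lt {q : ℕ} (hq : 1 < q) (c : ℕ) :
    (q + 1) * (q ^ c - 1) < q ^ (c + 2) - 1 := by
  have h := Nat.one_le_pow c q (by omega)
  zify [h, Nat.one_le_pow (c + 2) q (by omega)]
  have hq2 : (q : ℤ) + 2 ≤ q ^ 2 := by nlinarith
  rw [pow_add]
  nlinarith [mul_le_mul_of_nonneg_left hq2 (by positivity : (0 : ℤ) ≤ q ^ c)]

theorem exists_equiv_of_eq_of_subtype_ne {ι κ α : Type*} {A : ι → α} {B : κ → α} {i₀ : ι}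
    {j₀ : κ} (h₀ : A i₀ = B j₀) (e : {i // i ≠ i₀} ≃ {j // j ≠ j₀})
    (he : ∀ i : {i // i ≠ i₀}, A i = B (e i)) : ∃ e' : ι ≃ κ, ∀ i, A i = B (e' i) := by
  refine ⟨(Equiv.optionSubtypeNe i₀).symm.trans
    ((Equiv.optionCongr e).trans (Equiv.optionSubtypeNe j₀)), fun i => ?_⟩
  by_cases hi : i = i₀
  · subst hi
    simpa using h₀
  · simpa [Equiv.optionSubtypeNe_symm_of_ne hi] using he ⟨i, hi⟩

theorem Finite.exists_max_or_exists_max {ι κ α : Type*} [Finite ι] [Finite κ] [Nonempty ι]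
    [LinearOrder α] (f : ι → α) (g : κ → α) :
    (∃ i, (∀ i', f i' ≤ f i) ∧ ∀ j, g j ≤ f i) ∨ ∃ j, (∀ i, f i ≤ g j) ∧ ∀ j', g j' ≤ g j := by
  obtain ⟨x | x, hx⟩ := Finite.exists_max (Sum.elim f g)
  · exact .inl ⟨x, fun i => hx (.inl i), fun j => hx (.inr j)⟩
  · exact .inr ⟨x, fun i => hx (.inl i), fun j => hx (.inr j)⟩

namespace Submodule

section memCount

variable {R E ι κ : Type*} [Semiring R] [AddCommMonoid E] [Module R E] [Fintype ι] [Fintype κ]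

noncomputable def memCount (A : ι → Submodule R E) (x : E) : ℕ := #{i | x ∈ A i}

variable {A : ι → Submodule R E} {B : κ → Submodule R E} {x : E}

theorem memCount_zero : memCount A 0 = Fintype.card ι := by
  simp [memCount]

theorem memCount_pos : 0 < memCount A x ↔ ∃ i, x ∈ A i := by
  simp [memCount, Finset.card_pos, Finset.filter_nonempty_iff]

theorem memCount_eq_card : memCount A x = Fintype.card ι ↔ ∀ i, x ∈ A i := by
  simp [memCount, ← Finset.card_univ, Finset.card_filter_eq_iff]

theorem memCount_eq_ite_add (i₀ : ι) :
    memCount A x = (if x ∈ A i₀ then 1 else 0) + memCount (fun i : {i // i ≠ i₀} => A i) x := by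
  simp only [memCount, Finset.card_filter]
  rw [Fintype.sum_eq_add_sum_compl i₀, Finset.sum_subtype _ (p := (· ≠ i₀)) (by simp)]

theorem card_eq_of_memCount_eq (h : memCount A = memCount B) :
    Fintype.card ι = Fintype.card κ := by
  rw [← memCount_zero (A := A), h, memCount_zero]

theorem exists_mem_of_memCount_eq (h : memCount A = memCount B) {i : ι} (hx : x ∈ A i) :
    ∃ j, x ∈ B j :=
  memCount_pos.1 (h ▸ memCount_pos.2 ⟨i, hx⟩)

theorem mem_of_memCount_eq (h : memCount A = memCount B) (hx : ∀ j, x ∈ B j) (i : ι) :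
    x ∈ A i :=
  memCount_eq_card.1 (by rw [h, card_eq_of_memCount_eq h]; exact memCount_eq_card.2 hx) i

theorem memCount_subtype_ne_eq (h : memCount A = memCount B) {i₀ : ι} {j₀ : κ}
    (h₀ : A i₀ = B j₀) :
    memCount (fun i : {i // i ≠ i₀} => A i) = memCount (fun j : {j // j ≠ j₀} => B j) := by
  funext x
  have hx := congrFun h x
  rw [memCount_eq_ite_add i₀, memCount_eq_ite_add j₀, h₀] at hx
  omega

end memCount

section Field

variable {K E : Type*} [Field K] [AddCommGroup E] [Module K E]

theorem add_smul_mem_injective {P : Submodule K E} {x y : E} (hx : x ∉ P) {c c' : K}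
    (h : y + c • x ∈ P) (h' : y + c' • x ∈ P) : c = c' := by
  by_contra hcc
  have hdiff : (c - c') • x ∈ P := by
    simpa [sub_smul, add_sub_add_left_eq_sub] using P.sub_mem h h'
  exact hx ((P.smul_mem_iff (sub_ne_zero.2 hcc)).1 hdiff)

theorem exists_le_finrank_eq [FiniteDimensional K E] (S : Submodule K E) {k : ℕ}
    (hk : k ≤ finrank K S) : ∃ T ≤ S, finrank K T = k := by
  obtain ⟨f, hf⟩ := exists_linearIndependent_of_le_finrank hk
  exact ⟨(span K (Set.range f)).map S.subtype, map_subtype_le _ _,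
    by rw [finrank_map_subtype_eq, finrank_span_eq_card hf, Fintype.card_fin]⟩

theorem finrank_inf_ker_add_one [FiniteDimensional K E] {P : Submodule K E} {f : Dual K E}
    (h : ¬P ≤ LinearMap.ker f) :
    finrank K (P ⊓ LinearMap.ker f : Submodule K E) + 1 = finrank K P := by
  have hf : f.domRestrict P ≠ 0 := fun h0 => h fun x hx => by
    simpa using LinearMap.congr_fun h0 ⟨x, hx⟩
  rw [← Dual.finrank_ker_add_one_of_ne_zero hf, LinearMap.ker_domRestrict, ← map_comap_subtype,
    finrank_map_subtype_eq]

theorem mem_dualAnnihilator_iff_le_ker {P : Submodule K E} {f : Dual K E} :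
    f ∈ P.dualAnnihilator ↔ P ≤ LinearMap.ker f :=
  (mem_dualAnnihilator f).trans ⟨fun h _ hx => h _ hx, fun h _ hx => h hx⟩

theorem ncard_sdiff_zero [Fintype K] [Finite E] (P : Submodule K E) :
    ((P : Set E) \ {0}).ncard = Fintype.card K ^ finrank K P - 1 := by
  rw [Set.ncard_sdiff_singleton_of_mem P.zero_mem, ← Nat.card_coe_set_eq, SetLike.coe_sort_coe,
    natCard_eq_pow_finrank (K := K), Nat.card_eq_fintype_card]

end Field

structure IsProperCover {R M ι : Type*} [Semiring R] [AddCommMonoid M] [Module R M]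
    (X : Submodule R M) (C : ι → Submodule R M) : Prop where
  lt : ∀ j, C j < X
  cover : ∀ x ∈ X, ∃ j, x ∈ C j

namespace IsProperCover

variable {K E ι : Type*} [Field K] [Fintype K] [AddCommGroup E] [Module K E] [Fintype ι]
  {X : Submodule K E} {C : ι → Submodule K E}

theorem exists_equiv_add_smul_mem (hC : X.IsProperCover C)
    (hι : Fintype.card ι = Fintype.card K + 1) {m : ι} {x y : E} (hx : x ∈ C m)
    (hxm : ∀ l ≠ m, x ∉ C l) (hy : y ∈ X) (hym : y ∉ C m) :
    ∃ g : K ≃ {l // l ≠ m}, ∀ c (l : {l // l ≠ m}), y + c • x ∈ C l ↔ g c = l := by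
  have hmem : ∀ c : K, ∃ l : {l // l ≠ m}, y + c • x ∈ C l := by
    intro c
    obtain ⟨j, hj⟩ := hC.cover _ (X.add_mem hy (X.smul_mem c ((hC.lt m).le hx)))
    refine ⟨⟨j, ?_⟩, hj⟩
    rintro rfl
    exact hym (by simpa only [add_sub_cancel_right] using (C j).sub_mem hj ((C j).smul_mem c hx))
  choose g hg using hmem
  have hinj : Function.Injective g := fun c c' hcc =>
    add_smul_mem_injective (hxm _ (g c).2) (hg c) (hcc ▸ hg c')
  have hbij : Function.Bijective g :=
    (Fintype.bijective_iff_injective_and_card g).2 ⟨hinj, by simp [hι]⟩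
  refine ⟨Equiv.ofBijective g hbij, fun c l => ⟨fun h => ?_, fun h => h ▸ hg c⟩⟩
  obtain ⟨c', rfl⟩ := hbij.2 l
  exact congrArg g (add_smul_mem_injective (hxm _ (g c').2) h (hg c'))

variable [Finite E]

theorem pow_finrank_sub_one_le (hC : X.IsProperCover C) :
    Fintype.card K ^ finrank K X - 1 ≤ ∑ j, (Fintype.card K ^ finrank K (C j) - 1) := by
  simp only [← ncard_sdiff_zero]
  refine (Set.ncard_le_ncard ?_).trans (Set.ncard_iUnion_le_of_fintype _)
  rintro x ⟨hx, hx0⟩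
  obtain ⟨j, hj⟩ := hC.cover x hx
  exact Set.mem_iUnion.2 ⟨j, hj, hx0⟩

theorem card_lt (hC : X.IsProperCover C) : Fintype.card K < Fintype.card ι := by
  by_contra! hι
  obtain ⟨j₀, -⟩ := hC.cover 0 X.zero_mem
  obtain ⟨e, he⟩ : ∃ e, finrank K X = e + 1 :=
    Nat.exists_eq_add_one.2 (Nat.zero_lt_of_lt (finrank_lt_finrank_of_lt (hC.lt j₀)))
  have hle : ∀ j, Fintype.card K ^ finrank K (C j) - 1 ≤ Fintype.card K ^ e - 1 := fun j =>
    Nat.sub_le_sub_right (Nat.pow_le_pow_right Fintype.card_pos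
      (by have := finrank_lt_finrank_of_lt (hC.lt j); omega)) 1
  have hsum := hC.pow_finrank_sub_one_le.trans (Finset.sum_le_sum fun j _ => hle j)
  rw [Finset.sum_const, Finset.card_univ, smul_eq_mul, he] at hsum
  exact (hsum.trans (Nat.mul_le_mul_right _ hι)).not_gt
    (Nat.mul_pow_sub_one_lt Fintype.one_lt_card e)


theorem exists_mem_forall_ne_notMem (hC : X.IsProperCover C)
    (hι : Fintype.card ι = Fintype.card K + 1) (m : ι) : ∃ x ∈ C m, ∀ l ≠ m, x ∉ C l := by
  by_contra! h
  have hC' : X.IsProperCover fun l : {l // l ≠ m} => C l := by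
    refine ⟨fun l => hC.lt l, fun x hx => ?_⟩
    obtain ⟨j, hj⟩ := hC.cover x hx
    by_cases hjm : j = m
    · obtain ⟨l, hlm, hl⟩ := h x (hjm ▸ hj)
      exact ⟨⟨l, hlm⟩, hl⟩
    · exact ⟨⟨j, hjm⟩, hj⟩
  exact hC'.card_lt.ne' (by simp [hι])

theorem sup_eq (hC : X.IsProperCover C) (hι : Fintype.card ι = Fintype.card K + 1) {j l : ι}
    (hjl : j ≠ l) : C j ⊔ C l = X := by
  refine le_antisymm (sup_le (hC.lt j).le (hC.lt l).le) fun z hz => ?_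
  by_cases hzj : z ∈ C j
  · exact mem_sup_left hzj
  obtain ⟨x, hx, hxj⟩ := hC.exists_mem_forall_ne_notMem hι j
  obtain ⟨g, hg⟩ := hC.exists_equiv_add_smul_mem hι hx hxj hz hzj
  set c := g.symm ⟨l, hjl.symm⟩
  have hl : z + c • x ∈ C l := (hg c ⟨l, hjl.symm⟩).2 (by simp [c])
  simpa only [add_sub_cancel_right] using
    (C j ⊔ C l).sub_mem (mem_sup_right hl) (mem_sup_left ((C j).smul_mem c hx))

theorem inf_le (hC : X.IsProperCover C) (hι : Fintype.card ι = Fintype.card K + 1) {j l : ι}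
    (hjl : j ≠ l) (m : ι) : C j ⊓ C l ≤ C m := by
  rintro z ⟨hzj, hzl⟩
  by_contra hzm
  have hjm : j ≠ m := by rintro rfl; exact hzm hzj
  have hlm : l ≠ m := by rintro rfl; exact hzm hzl
  obtain ⟨x, hx, hxm⟩ := hC.exists_mem_forall_ne_notMem hι m
  obtain ⟨g, hg⟩ := hC.exists_equiv_add_smul_mem hι hx hxm ((hC.lt j).le hzj) hzm
  have hj := (hg 0 ⟨j, hjm⟩).1 (by simpa using hzj)
  have hl := (hg 0 ⟨l, hlm⟩).1 (by simpa using hzl)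
  exact hjl (congrArg Subtype.val (hj.symm.trans hl))

theorem inf_eq_iInf (hC : X.IsProperCover C) (hι : Fintype.card ι = Fintype.card K + 1)
    {j l : ι} (hjl : j ≠ l) : C j ⊓ C l = ⨅ m, C m :=
  le_antisymm (le_iInf (hC.inf_le hι hjl)) (le_inf (iInf_le _ j) (iInf_le _ l))

theorem finrank_add_finrank (hC : X.IsProperCover C) (hι : Fintype.card ι = Fintype.card K + 1)
    {j l : ι} (hjl : j ≠ l) :
    finrank K (C j) + finrank K (C l) = finrank K X + finrank K (⨅ m, C m : Submodule K E) := by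
  rw [← hC.sup_eq hι hjl, ← hC.inf_eq_iInf hι hjl, finrank_sup_add_finrank_inf_eq]

theorem finrank_eq (hC : X.IsProperCover C) (hι : Fintype.card ι = Fintype.card K + 1)
    (j l : ι) : finrank K (C j) = finrank K (C l) := by
  rcases eq_or_ne j l with rfl | hjl
  · rfl
  have hcard : 1 < (univ.erase j).card := by
    simp [hι, Fintype.one_lt_card (α := K)]
  obtain ⟨m, hm, hml⟩ := Finset.exists_mem_ne hcard l
  have hj := hC.finrank_add_finrank hι (Finset.ne_of_mem_erase hm).symm
  have hl := hC.finrank_add_finrank hι hml.symm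
  omega

theorem finrank_add_one (hC : X.IsProperCover C) (hι : Fintype.card ι = Fintype.card K + 1)
    (j : ι) : finrank K (C j) + 1 = finrank K X := by
  have hlt := finrank_lt_finrank_of_lt (hC.lt j)
  by_contra hne
  have hsum := hC.pow_finrank_sub_one_le
  rw [Finset.sum_congr rfl fun l _ => by rw [hC.finrank_eq hι l j], sum_const, card_univ, hι,
    smul_eq_mul] at hsum
  have hmono : Fintype.card K ^ (finrank K (C j) + 2) - 1 ≤ Fintype.card K ^ finrank K X - 1 :=
    Nat.sub_le_sub_right (Nat.pow_le_pow_right Fintype.card_pos (by omega)) 1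
  exact (hmono.trans hsum).not_gt (Nat.succ_mul_pow_sub_one_lt Fintype.one_lt_card _)

theorem finrank_iInf_add_two (hC : X.IsProperCover C)
    (hι : Fintype.card ι = Fintype.card K + 1) :
    finrank K (⨅ m, C m : Submodule K E) + 2 = finrank K X := by
  obtain ⟨j, l, hjl⟩ := Fintype.exists_pair_of_one_lt_card
    (show 1 < Fintype.card ι by simp [hι, Fintype.card_pos])
  have := hC.finrank_add_finrank hι hjl
  have := hC.finrank_add_one hι j
  have := hC.finrank_add_one hι l
  omega

end IsProperCover

section memCountEq

variable {K E ι κ : Type*} [Field K] [AddCommGroup E] [Module K E] [Finite E] [Fintype ι]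
  [Fintype κ] {A : ι → Submodule K E} {B : κ → Submodule K E}

theorem isProperCover_inf_of_memCount_eq (h : memCount A = memCount B) {i : ι}
    (hne : ∀ j, A i ≠ B j) (hB : ∀ j, finrank K (B j) ≤ finrank K (A i)) :
    (A i).IsProperCover fun j => A i ⊓ B j where
  lt j := inf_le_left.lt_of_ne fun heq =>
    hne j (eq_of_le_of_finrank_le (inf_eq_left.1 heq) (hB j))
  cover _ hx := (exists_mem_of_memCount_eq h hx).imp fun _ hj => ⟨hx, hj⟩

variable [Fintype K]

theorem exists_eq_of_memCount_eq_of_finrank_le (hι : Fintype.card ι ≤ Fintype.card K)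
    (h : memCount A = memCount B) {i : ι} (hB : ∀ j, finrank K (B j) ≤ finrank K (A i)) :
    ∃ j, A i = B j := by
  by_contra! hne
  exact (isProperCover_inf_of_memCount_eq h hne hB).card_lt.not_ge
    (card_eq_of_memCount_eq h ▸ hι)

theorem exists_eq_of_memCount_eq [Nonempty ι] (hι : Fintype.card ι ≤ Fintype.card K)
    (h : memCount A = memCount B) : ∃ i j, A i = B j := by
  rcases Finite.exists_max_or_exists_max (fun i => finrank K (A i)) (fun j => finrank K (B j))
    with ⟨i, -, hB⟩ | ⟨j, hA, -⟩
  · exact ⟨i, exists_eq_of_memCount_eq_of_finrank_le hι h hB⟩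
  · obtain ⟨i, hi⟩ :=
      exists_eq_of_memCount_eq_of_finrank_le (card_eq_of_memCount_eq h ▸ hι) h.symm hA
    exact ⟨i, j, hi.symm⟩

theorem exists_equiv_of_memCount_eq (hι : Fintype.card ι ≤ Fintype.card K)
    (h : memCount A = memCount B) : ∃ e : ι ≃ κ, ∀ i, A i = B (e i) := by
  induction hn : Fintype.card ι generalizing ι κ with
  | zero =>
    have : IsEmpty ι := Fintype.card_eq_zero_iff.1 hn
    have : IsEmpty κ := Fintype.card_eq_zero_iff.1 ((card_eq_of_memCount_eq h).symm.trans hn)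
    exact ⟨Equiv.equivOfIsEmpty ι κ, isEmptyElim⟩
  | succ n ih =>
    have : Nonempty ι := Fintype.card_pos_iff.1 (by omega)
    obtain ⟨i₀, j₀, h₀⟩ := exists_eq_of_memCount_eq hι h
    obtain ⟨e, he⟩ := ih (by simp; omega) (memCount_subtype_ne_eq h h₀) (by simp [hn])
    exact exists_equiv_of_eq_of_subtype_ne h₀ e he

theorem exists_equiv_of_memCount_eq_of_eq (hι : Fintype.card ι ≤ Fintype.card K + 1)
    (h : memCount A = memCount B) {i₀ : ι} {j₀ : κ} (h₀ : A i₀ = B j₀) :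
    ∃ e : ι ≃ κ, ∀ i, A i = B (e i) :=
  let ⟨e, he⟩ := exists_equiv_of_memCount_eq (by simp; omega) (memCount_subtype_ne_eq h h₀)
  exists_equiv_of_eq_of_subtype_ne h₀ e he

end memCountEq

section memCountEqSameIndex

variable {K E ι : Type*} [Field K] [Fintype K] [AddCommGroup E] [Module K E] [Finite E]
  [Fintype ι] {A B : ι → Submodule K E}

theorem le_sup_of_memCount_eq (hι : Fintype.card ι = Fintype.card K + 1)
    (h : memCount A = memCount B) (hne : ∀ i j, A i ≠ B j) {i₁ : ι}
    (hA : ∀ i, finrank K (A i) ≤ finrank K (A i₁)) (hB : ∀ j, finrank K (B j) ≤ finrank K (A i₁))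
    {k : ι} (hk : k ≠ i₁) (j : ι) : B j ≤ A i₁ ⊔ A k := by
  have hC := isProperCover_inf_of_memCount_eq h (hne i₁) hB
  rcases (hB j).lt_or_eq with hlt | heq
  · have hj := hC.finrank_add_one hι j
    have hBj : A i₁ ⊓ B j = B j := eq_of_le_of_finrank_le inf_le_right (by omega)
    exact hBj ▸ inf_le_left.trans le_sup_left
  · have hC' := isProperCover_inf_of_memCount_eq h.symm (fun i => (hne i j).symm)
      fun i => heq ▸ hA i
    rw [← hC'.sup_eq hι hk.symm]
    exact sup_le_sup inf_le_right inf_le_right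

theorem exists_upper_bound_finrank_le_add_two_of_isMax
    (hι : Fintype.card ι = Fintype.card K + 1) (h : memCount A = memCount B)
    (hne : ∀ i j, A i ≠ B j) {i₁ : ι} (hA : ∀ i, finrank K (A i) ≤ finrank K (A i₁))
    (hB : ∀ j, finrank K (B j) ≤ finrank K (A i₁)) :
    ∃ T, (∀ i, A i ≤ T ∧ B i ≤ T) ∧ ∀ i, finrank K T ≤ finrank K (A i) + 2 := by
  have hC := isProperCover_inf_of_memCount_eq h (hne i₁) hB
  have hD : ∀ i, (⨅ j, A i₁ ⊓ B j) ≤ A i := fun i x hx =>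
    mem_of_memCount_eq h (fun j => ((mem_iInf _).1 hx j).2) i
  have : Nonempty {k // k ≠ i₁} := Fintype.card_pos_iff.1 (by simp [hι, Fintype.card_pos])
  obtain ⟨⟨k, hk⟩, hkmin⟩ := Finite.exists_min fun k : {k // k ≠ i₁} => finrank K (A k)
  have hBT : ∀ j, B j ≤ A i₁ ⊔ A k := le_sup_of_memCount_eq hι h hne hA hB hk
  refine ⟨A i₁ ⊔ A k, fun i => ⟨fun x hx => ?_, hBT i⟩, fun i => ?_⟩
  · obtain ⟨j, hj⟩ := exists_mem_of_memCount_eq h hx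
    exact hBT j hj
  · have hmin : finrank K (A k) ≤ finrank K (A i) :=
      if hi : i = i₁ then hi ▸ hA k else hkmin ⟨i, hi⟩
    have := finrank_sup_add_finrank_inf_eq (A i₁) (A k)
    have := finrank_mono (le_inf (hD i₁) (hD k))
    have := hC.finrank_iInf_add_two hι
    omega

theorem exists_upper_bound_finrank_le_add_two (hι : Fintype.card ι = Fintype.card K + 1)
    (h : memCount A = memCount B) (hne : ∀ i j, A i ≠ B j) :
    ∃ T, (∀ i, A i ≤ T ∧ B i ≤ T) ∧
      ((∀ i, finrank K T ≤ finrank K (A i) + 2) ∨ ∀ i, finrank K T ≤ finrank K (B i) + 2) := by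
  have : Nonempty ι := Fintype.card_pos_iff.1 (by omega)
  rcases Finite.exists_max_or_exists_max (fun i => finrank K (A i)) (fun j => finrank K (B j))
    with ⟨i, hA, hB⟩ | ⟨j, hA, hB⟩
  · obtain ⟨T, hT, hdim⟩ := exists_upper_bound_finrank_le_add_two_of_isMax hι h hne hA hB
    exact ⟨T, hT, .inl hdim⟩
  · obtain ⟨T, hT, hdim⟩ := exists_upper_bound_finrank_le_add_two_of_isMax hι h.symm
      (fun i j => (hne j i).symm) hB hA
    exact ⟨T, fun i => (hT i).symm, .inr hdim⟩

end memCountEqSameIndex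

section Hyperplane

variable {K E ι : Type*} [Field K] [Fintype K] [AddCommGroup E] [Module K E]

theorem inv_card_mul_card_inf_ker [Finite E] (P : Submodule K E) (f : Dual K E) :
    (Nat.card P : ℝ)⁻¹ * Nat.card (P ⊓ LinearMap.ker f : Submodule K E) =
      if P ≤ LinearMap.ker f then 1 else (Fintype.card K : ℝ)⁻¹ := by
  split_ifs with h
  · rw [inf_eq_left.2 h, inv_mul_cancel₀ (Nat.cast_ne_zero.2 Nat.card_pos.ne')]
  · have hcard : Nat.card P = Nat.card (P ⊓ LinearMap.ker f : Submodule K E) * Fintype.card K := by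
      rw [natCard_eq_pow_finrank (K := K) (V := P),
        natCard_eq_pow_finrank (K := K) (V := ↥(P ⊓ LinearMap.ker f)),
        ← finrank_inf_ker_add_one h, pow_succ, Nat.card_eq_fintype_card]
    have : (Nat.card (P ⊓ LinearMap.ker f : Submodule K E) : ℝ) ≠ 0 :=
      Nat.cast_ne_zero.2 Nat.card_pos.ne'
    rw [hcard, Nat.cast_mul, mul_inv, mul_comm, ← mul_assoc, mul_inv_cancel₀ this, one_mul]

theorem sum_ker_sum_inv_card_mul_indicator [Fintype E] [Fintype ι]
    (P : ι → Submodule K E) (f : Dual K E) :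
    ∑ w with w ∈ LinearMap.ker f, ∑ i, (Nat.card (P i) : ℝ)⁻¹ * (if w ∈ P i then 1 else 0) =
      Fintype.card ι * (Fintype.card K : ℝ)⁻¹ +
        (1 - (Fintype.card K : ℝ)⁻¹) * memCount (fun i => (P i).dualAnnihilator) f := by
  have hP : ∀ i, ∑ w with w ∈ LinearMap.ker f, (Nat.card (P i) : ℝ)⁻¹ *
      (if w ∈ P i then 1 else 0) = (Fintype.card K : ℝ)⁻¹ +
        (1 - (Fintype.card K : ℝ)⁻¹) * if f ∈ (P i).dualAnnihilator then 1 else 0 := by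
    intro i
    have hcard : #{w | w ∈ LinearMap.ker f ∧ w ∈ P i} =
        Nat.card (P i ⊓ LinearMap.ker f : Submodule K E) := by
      rw [Nat.card_eq_fintype_card, Fintype.card_subtype]
      congr 1
      ext w
      simp [and_comm]
    rw [← Finset.mul_sum, Finset.sum_boole, Finset.filter_filter, hcard, inv_card_mul_card_inf_ker,
      mem_dualAnnihilator_iff_le_ker]
    split_ifs <;> ring
  rw [Finset.sum_comm, Finset.sum_congr rfl fun i _ => hP i, sum_add_distrib, ← mul_sum, sum_boole]
  simp [memCount]

end Hyperplane

end Submodule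

open Submodule

theorem IsometrySolution.memCount_dualAnnihilator_eq {K W : Type*} [Field K] [Fintype K]
    [AddCommGroup W] [Module K W] [Fintype W] {m : ℕ} {U V : Fin m → Submodule K W}
    (hsol : IsometrySolution U V) :
    memCount (fun i => (V i).dualAnnihilator) = memCount (fun i => (U i).dualAnnihilator) := by
  funext f
  have hq1 : (Fintype.card K : ℝ) ≠ 1 := by exact_mod_cast Fintype.one_lt_card.ne'
  have hq : 1 - (Fintype.card K : ℝ)⁻¹ ≠ 0 := sub_ne_zero.2 (inv_ne_one.2 hq1).symm
  have hsum := Finset.sum_congr rfl fun w (_ : w ∈ ({w | w ∈ LinearMap.ker f} : Finset W)) =>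
    hsol w
  rw [sum_ker_sum_inv_card_mul_indicator, sum_ker_sum_inv_card_mul_indicator] at hsum
  exact_mod_cast mul_left_cancel₀ hq (add_left_cancel hsum)

theorem nontrivial_solution_common_subspace_general
    (K W : Type*) [Field K] [Fintype K] [AddCommGroup W] [Module K W]
    [FiniteDimensional K W]
    (U V : Fin (Fintype.card K + 1) → Submodule K W)
    (hsol : IsometrySolution U V) (hnontriv : ¬ TuplesEquiv U V)
    (n : ℕ)
    (hmaxV : (Finset.univ.sup fun i => Module.finrank K ↥(V i)) = n)
    (hmaxU : (Finset.univ.sup fun i => Module.finrank K ↥(U i)) = n) :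
    ∃ S : Submodule K W, Module.finrank K ↥S = n - 2 ∧ ∀ i, S ≤ U i ∧ S ≤ V i := by
  have : Finite W := Module.finite_of_finite K
  have : Fintype W := Fintype.ofFinite W
  have : Finite (Dual K W) := Module.finite_of_finite K
  have hcount := hsol.memCount_dualAnnihilator_eq
  have hne : ∀ i j, (V i).dualAnnihilator ≠ (U j).dualAnnihilator := fun i j hij =>
    hnontriv <| by
      obtain ⟨e, he⟩ := exists_equiv_of_memCount_eq_of_eq (by simp) hcount hij
      exact ⟨e, fun i => Subspace.dualAnnihilator_inj.1 (he i)⟩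
  obtain ⟨T, hT, hTdim⟩ := exists_upper_bound_finrank_le_add_two (by simp) hcount hne
  obtain ⟨iV, -, hiV⟩ := exists_mem_eq_sup univ univ_nonempty fun i => finrank K (V i)
  obtain ⟨iU, -, hiU⟩ := exists_mem_eq_sup univ univ_nonempty fun i => finrank K (U i)
  have hTn : finrank K T + n ≤ finrank K W + 2 := by
    have := Subspace.finrank_add_finrank_dualAnnihilator_eq (V iV)
    have := Subspace.finrank_add_finrank_dualAnnihilator_eq (U iU)
    rcases hTdim with h | h
    · have := h iV
      omega
    · have := h iU
      omega
  obtain ⟨S, hST, hS⟩ := T.dualCoannihilator.exists_le_finrank_eq (k := n - 2)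
    (by have := Subspace.finrank_add_finrank_dualCoannihilator_eq T; omega)
  have hle : ∀ P : Submodule K W, P.dualAnnihilator ≤ T → S ≤ P := fun P hP =>
    hST.trans ((dualCoannihilator_anti hP).trans_eq Subspace.dualAnnihilator_dualCoannihilator_eq)
  exact ⟨S, hS, fun i => ⟨hle _ (hT i).2, hle _ (hT i).1⟩⟩

/-- In a nontrivial minimal solution with equal maximal dimensions `n > 1`, there is a
subspace `S` of dimension `n - 2` contained in every `U i` and every `V i`. -/
theorem nontrivial_solution_common_subspace
    (K W : Type*) [Field K] [Fintype K] [AddCommGroup W] [Module K W]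
    [FiniteDimensional K W]
    (U V : Fin (Fintype.card K + 1) → Submodule K W)
    (hsol : IsometrySolution U V) (hnontriv : ¬ TuplesEquiv U V)
    (n : ℕ) (hn : 1 < n)
    (hmaxV : (Finset.univ.sup fun i => Module.finrank K ↥(V i)) = n)
    (hmaxU : (Finset.univ.sup fun i => Module.finrank K ↥(U i)) = n) :
    ∃ S : Submodule K W, Module.finrank K ↥S = n - 2 ∧ ∀ i, S ≤ U i ∧ S ≤ V i :=
  nontrivial_solution_common_subspace_general K W U V hsol hnontriv n hmaxV hmaxU
end
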